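/- In the splits-and-merges setup, assume that every value m(y) (y ∈ Y_λ, λ ∈ Λ) is invertible and central in R, and that 𝒯 ⊆ R is a G-stable subring containing m(y) and m(y)^{-1} for all y. Let B^𝒯 be the 𝕜-subalgebra of R_G(X×X) generated by all K_λ (λ ∈ Λ) together with all elements t_ω defined by t_ω(x,x') = δ_{x,x'}·e(x)·t(x), where t : X → R ranges over G-equivariant functions with values in 𝒯. Let A^𝒯 be the 𝕜-subalgebra of A := ⊕_{λ,μ∈Λ} R_G(Y_λ×Y_μ) (twisted convolution algebra) generated by B^𝒯 together with all S_λ and M_λ, and let C^𝒯 := A^𝒯 * 1_ω ⊆ ⊕_λ R_G(Y_λ×X), an (A^𝒯, B^𝒯)-bimodule under twisted convolution. Then the following Schur duality holds: every endomorphism of C^𝒯 as a left A^𝒯-module is given by right convolution with a unique element of B^𝒯, and every endomorphism of C^𝒯 as a right B^𝒯-module is given by left convolution with a unique element of A^𝒯. Moreover B^𝒯 = 1_ω * A^𝒯 * 1_ω. -/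

import Mathlib

/-!
Write `t_λ` for the diagonal element of `B^𝒯` with entries `m(p_λ x)⁻¹`. The identities
`S_λ * M_μ = δ_{λμ} K_λ`, `M_λ * t_λ * S_λ = 1_λ` and `∑_λ 1_λ = 1` show, by induction on the
generators, that `S_λ * a * M_μ ∈ B^𝒯` for every `a ∈ A^𝒯`; since `S_ω = M_ω = 1_ω` this gives
`B^𝒯 = 1_ω * A^𝒯 * 1_ω`. An endomorphism `φ` of the left `A^𝒯`-module `C^𝒯` is right convolution
with `φ(1_ω)`, which lies in `1_ω * A^𝒯 * 1_ω`. For an endomorphism `ψ` of the right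
`B^𝒯`-module, every `c ∈ C^𝒯` is `∑_λ M_λ * (t_λ * S_λ * c)` with `t_λ * S_λ * c ∈ B^𝒯`, so `ψ` is
left convolution with `∑_λ ψ(M_λ) * t_λ * S_λ`; uniqueness follows from
`a = ∑_λ a * M_λ * t_λ * S_λ`.
-/

open Finset

section Defs

variable (k : Type*) {G R : Type*} {Λ : Type*}
variable [Field k] [Group G] [Ring R] [Algebra k R]
  [MulSemiringAction G R] [SMulCommClass G k R]
variable [Fintype Λ] [DecidableEq Λ]
variable (Yf : Λ → Type*) [∀ l, Fintype (Yf l)] [∀ l, DecidableEq (Yf l)]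
  [∀ l, MulAction G (Yf l)]

/-- The disjoint union `Y = ⨿_λ Y_λ`. -/
abbrev YS := (l : Λ) × Yf l

/-- Twisted convolution of `R`-valued kernels on `Y × Y`, with twist `e`. -/
noncomputable def conv (e : YS Yf → R) (f g : YS Yf → YS Yf → R) :
    YS Yf → YS Yf → R :=
  fun a b => ∑ c, f a c * Ring.inverse (e c) * g c b

variable (ω : Λ) (p : ∀ l, Yf ω → Yf l) (e : YS Yf → R)

/-- The idempotent `1_λ`, supported on `Y_λ × Y_λ`: `1_λ(y,y') = δ_{y,y'} e(y)`. -/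
noncomputable def oneEl (l : Λ) : YS Yf → YS Yf → R :=
  fun a b => if a = b ∧ a.1 = l then e a else 0

/-- The split `S_λ(x,y) = δ_{p_λ(x),y}·e(y)`, supported on `X × Y_λ`. -/
noncomputable def Sel (l : Λ) : YS Yf → YS Yf → R :=
  fun a b =>
    if h : a.1 = ω ∧ b.1 = l then (if p l (h.1 ▸ a.2) = h.2 ▸ b.2 then e b else 0)
    else 0

/-- The merge `M_λ(y,x) = δ_{y,p_λ(x)}·e(y)`, supported on `Y_λ × X`. -/
noncomputable def Mel (l : Λ) : YS Yf → YS Yf → R :=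
  fun a b =>
    if h : a.1 = l ∧ b.1 = ω then (if h.1 ▸ a.2 = p l (h.2 ▸ b.2) then e a else 0)
    else 0

/-- `K_λ(x,x') = δ_{p_λ(x),p_λ(x')}·e(p_λ(x))`, supported on `X × X`. -/
noncomputable def Kel (l : Λ) : YS Yf → YS Yf → R :=
  fun a b =>
    if h : a.1 = ω ∧ b.1 = ω then
      (if p l (h.1 ▸ a.2) = p l (h.2 ▸ b.2) then e ⟨l, p l (h.1 ▸ a.2)⟩ else 0)
    else 0

/-- The diagonal element `t_ω(x,x') = δ_{x,x'}·e(x)·t(x)`, supported on `X × X`. -/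
noncomputable def tEl (t : Yf ω → R) : YS Yf → YS Yf → R :=
  fun a b => if h : a = b ∧ a.1 = ω then e a * t (h.2 ▸ a.2) else 0

/-- `m(y) = ∑_{x ∈ p_λ⁻¹(y)} e(x)⁻¹·e(y)` for `y ∈ Y_λ`. -/
noncomputable def mval (l : Λ) (y : Yf l) : R :=
  ∑ x : Yf ω, if p l x = y then Ring.inverse (e ⟨ω, x⟩) * e ⟨l, y⟩ else 0

end Defs

/-- The 𝕜-subalgebra `B^𝒯` of the twisted convolution algebra `R_G(X×X)`,
generated by the `K_λ` and the diagonal elements `t_ω` for `G`-equivariant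
`𝒯`-valued functions `t` on `X`.  (Membership predicate.) -/
inductive InB (k G : Type*) {R : Type*} {Λ : Type*} [Field k] [Group G] [Ring R]
    [Algebra k R] [MulSemiringAction G R] [SMulCommClass G k R]
    [Fintype Λ] [DecidableEq Λ]
    (Yf : Λ → Type*) [∀ l, Fintype (Yf l)] [∀ l, DecidableEq (Yf l)]
    [∀ l, MulAction G (Yf l)]
    (ω : Λ) (p : ∀ l, Yf ω → Yf l) (e : YS Yf → R) (T : Subring R) :
    (YS Yf → YS Yf → R) → Prop
  | K (l : Λ) : InB k G Yf ω p e T (Kel Yf ω p e l)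
  | t (t : Yf ω → R) (ht : ∀ (g : G) (y : Yf ω), t (g • y) = g • t y)
      (hT : ∀ y, t y ∈ T) : InB k G Yf ω p e T (tEl Yf ω e t)
  | add {f g} : InB k G Yf ω p e T f → InB k G Yf ω p e T g → InB k G Yf ω p e T (f + g)
  | smul (c : k) {f} : InB k G Yf ω p e T f → InB k G Yf ω p e T (c • f)
  | mul {f g} : InB k G Yf ω p e T f → InB k G Yf ω p e T g →
      InB k G Yf ω p e T (conv Yf e f g)

/-- The 𝕜-subalgebra `A^𝒯` of the twisted convolution algebra
`⊕_{λ,μ} R_G(Y_λ×Y_μ)`, generated by `B^𝒯` and all splits and merges.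
(Membership predicate.) -/
inductive InA (k G : Type*) {R : Type*} {Λ : Type*} [Field k] [Group G] [Ring R]
    [Algebra k R] [MulSemiringAction G R] [SMulCommClass G k R]
    [Fintype Λ] [DecidableEq Λ]
    (Yf : Λ → Type*) [∀ l, Fintype (Yf l)] [∀ l, DecidableEq (Yf l)]
    [∀ l, MulAction G (Yf l)]
    (ω : Λ) (p : ∀ l, Yf ω → Yf l) (e : YS Yf → R) (T : Subring R) :
    (YS Yf → YS Yf → R) → Prop
  | ofB {f} : InB k G Yf ω p e T f → InA k G Yf ω p e T f
  | S (l : Λ) : InA k G Yf ω p e T (Sel Yf ω p e l)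
  | M (l : Λ) : InA k G Yf ω p e T (Mel Yf ω p e l)
  | add {f g} : InA k G Yf ω p e T f → InA k G Yf ω p e T g → InA k G Yf ω p e T (f + g)
  | smul (c : k) {f} : InA k G Yf ω p e T f → InA k G Yf ω p e T (c • f)
  | mul {f g} : InA k G Yf ω p e T f → InA k G Yf ω p e T g →
      InA k G Yf ω p e T (conv Yf e f g)

open scoped Ring

section Convolution

variable {k R Λ : Type*} [Field k] [Ring R] [Algebra k R] [Fintype Λ]
  {Yf : Λ → Type*} [∀ l, Fintype (Yf l)] {e : YS Yf → R}

local infixl:70 " ⋆ " => conv Yf e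

theorem conv_assoc (f g h : YS Yf → YS Yf → R) : f ⋆ g ⋆ h = f ⋆ (g ⋆ h) := by
  funext a b
  simp only [conv, sum_mul, mul_sum, mul_assoc]
  exact sum_comm

theorem conv_add_left (f g h : YS Yf → YS Yf → R) : (f + g) ⋆ h = f ⋆ h + g ⋆ h := by
  funext a b
  simp only [conv, Pi.add_apply, add_mul, sum_add_distrib]

theorem conv_add_right (f g h : YS Yf → YS Yf → R) : f ⋆ (g + h) = f ⋆ g + f ⋆ h := by
  funext a b
  simp only [conv, Pi.add_apply, mul_add, sum_add_distrib]

theorem conv_zero_left (f : YS Yf → YS Yf → R) : 0 ⋆ f = 0 := by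
  funext a b
  simp [conv]

theorem conv_zero_right (f : YS Yf → YS Yf → R) : f ⋆ 0 = 0 := by
  funext a b
  simp [conv]

theorem conv_smul_left (c : k) (f g : YS Yf → YS Yf → R) : (c • f) ⋆ g = c • (f ⋆ g) := by
  funext a b
  simp only [conv, Pi.smul_apply, smul_mul_assoc, smul_sum]

theorem conv_smul_right (c : k) (f g : YS Yf → YS Yf → R) : f ⋆ (c • g) = c • (f ⋆ g) := by
  funext a b
  simp only [conv, Pi.smul_apply, mul_smul_comm, smul_sum]

theorem conv_sum_left {ι : Type*} (s : Finset ι) (f : ι → YS Yf → YS Yf → R)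
    (g : YS Yf → YS Yf → R) : (∑ i ∈ s, f i) ⋆ g = ∑ i ∈ s, f i ⋆ g := by
  funext a b
  simp only [conv, Finset.sum_apply, sum_mul]
  exact sum_comm

theorem conv_sum_right {ι : Type*} (s : Finset ι) (f : YS Yf → YS Yf → R)
    (g : ι → YS Yf → YS Yf → R) : f ⋆ ∑ i ∈ s, g i = ∑ i ∈ s, f ⋆ g i := by
  funext a b
  simp only [conv, Finset.sum_apply, mul_sum]
  exact sum_comm

variable [DecidableEq Λ] [∀ l, DecidableEq (Yf l)]

theorem oneEl_conv (heu : ∀ a, IsUnit (e a)) (l : Λ) (f : YS Yf → YS Yf → R) :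
    oneEl Yf e l ⋆ f = fun a b => if a.1 = l then f a b else 0 := by
  funext a b
  simp [conv, oneEl, ite_and, Ring.mul_inverse_cancel _ (heu a)]

theorem conv_oneEl (heu : ∀ a, IsUnit (e a)) (f : YS Yf → YS Yf → R) (l : Λ) :
    f ⋆ oneEl Yf e l = fun a b => if b.1 = l then f a b else 0 := by
  funext a b
  simp [conv, oneEl, ite_and, mul_assoc, Ring.inverse_mul_cancel _ (heu b)]

theorem oneEl_conv_oneEl (heu : ∀ a, IsUnit (e a)) (l l' : Λ) :
    oneEl Yf e l ⋆ oneEl Yf e l' = if l = l' then oneEl Yf e l else 0 := by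
  rw [oneEl_conv heu]
  funext a b
  by_cases ha : a.1 = l <;> by_cases hl : l = l' <;> simp_all [oneEl]

theorem oneEl_conv_oneEl_self (heu : ∀ a, IsUnit (e a)) (l : Λ) :
    oneEl Yf e l ⋆ oneEl Yf e l = oneEl Yf e l := by
  rw [oneEl_conv_oneEl heu, if_pos rfl]

theorem sum_oneEl_conv (heu : ∀ a, IsUnit (e a)) (f : YS Yf → YS Yf → R) :
    ∑ l, oneEl Yf e l ⋆ f = f := by
  funext a b
  simp [Finset.sum_apply, oneEl_conv heu]

theorem sum_conv_oneEl (heu : ∀ a, IsUnit (e a)) (f : YS Yf → YS Yf → R) :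
    ∑ l, f ⋆ oneEl Yf e l = f := by
  funext a b
  simp [Finset.sum_apply, conv_oneEl heu]

theorem oneEl_conv_of_apply (heu : ∀ a, IsUnit (e a)) {l : Λ} {f : YS Yf → YS Yf → R}
    (hf : ∀ a b, a.1 ≠ l → f a b = 0) : oneEl Yf e l ⋆ f = f := by
  rw [oneEl_conv heu]
  funext a b
  split_ifs with ha
  exacts [rfl, (hf a b ha).symm]

theorem conv_oneEl_of_apply (heu : ∀ a, IsUnit (e a)) {l : Λ} {f : YS Yf → YS Yf → R}
    (hf : ∀ a b, b.1 ≠ l → f a b = 0) : f ⋆ oneEl Yf e l = f := by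
  rw [conv_oneEl heu]
  funext a b
  split_ifs with hb
  exacts [rfl, (hf a b hb).symm]

theorem apply_eq_zero_of_oneEl_conv (heu : ∀ a, IsUnit (e a)) {l : Λ}
    {f : YS Yf → YS Yf → R} (hf : oneEl Yf e l ⋆ f = f) {a : YS Yf} (ha : a.1 ≠ l)
    (b : YS Yf) : f a b = 0 := by
  rw [← hf, oneEl_conv heu]
  exact if_neg ha

theorem apply_eq_zero_of_conv_oneEl (heu : ∀ a, IsUnit (e a)) {l : Λ}
    {f : YS Yf → YS Yf → R} (hf : f ⋆ oneEl Yf e l = f) (a : YS Yf) {b : YS Yf}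
    (hb : b.1 ≠ l) : f a b = 0 := by
  rw [← hf, conv_oneEl heu]
  exact if_neg hb

theorem conv_eq_zero_of_ne (heu : ∀ a, IsUnit (e a)) {l l' : Λ} (hl : l ≠ l')
    {f g : YS Yf → YS Yf → R} (hf : f ⋆ oneEl Yf e l = f) (hg : oneEl Yf e l' ⋆ g = g) :
    f ⋆ g = 0 := by
  rw [← hf, ← hg, conv_assoc, ← conv_assoc (oneEl Yf e l), oneEl_conv_oneEl heu, if_neg hl,
    conv_zero_left, conv_zero_right]

theorem conv_apply_of_oneEl_conv (heu : ∀ a, IsUnit (e a)) {l : Λ}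
    (f : YS Yf → YS Yf → R) {g : YS Yf → YS Yf → R} (hg : oneEl Yf e l ⋆ g = g)
    (a b : YS Yf) : (f ⋆ g) a b = ∑ y : Yf l, f a ⟨l, y⟩ * (e ⟨l, y⟩)⁻¹ʳ * g ⟨l, y⟩ b := by
  rw [conv, Fintype.sum_sigma, sum_eq_single l]
  · intro l' _ hl'
    exact sum_eq_zero fun y _ => by
      rw [apply_eq_zero_of_oneEl_conv heu hg (a := ⟨l', y⟩) hl', mul_zero]
  · simp

theorem block_ext (heu : ∀ a, IsUnit (e a)) {l m : Λ} {f g : YS Yf → YS Yf → R}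
    (hfl : oneEl Yf e l ⋆ f = f) (hfr : f ⋆ oneEl Yf e m = f)
    (hgl : oneEl Yf e l ⋆ g = g) (hgr : g ⋆ oneEl Yf e m = g)
    (h : ∀ y y', f ⟨l, y⟩ ⟨m, y'⟩ = g ⟨l, y⟩ ⟨m, y'⟩) : f = g := by
  funext ⟨la, y⟩ ⟨lb, y'⟩
  by_cases ha : la = l
  · by_cases hb : lb = m
    · subst ha hb
      exact h y y'
    · rw [apply_eq_zero_of_conv_oneEl heu hfr _ hb, apply_eq_zero_of_conv_oneEl heu hgr _ hb]
  · rw [apply_eq_zero_of_oneEl_conv heu hfl ha, apply_eq_zero_of_oneEl_conv heu hgl ha]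

end Convolution

section SplitsMerges

variable {R Λ : Type*} [Ring R] [DecidableEq Λ] {Yf : Λ → Type*} [∀ l, DecidableEq (Yf l)]
  {ω : Λ} {p : ∀ l, Yf ω → Yf l} {e : YS Yf → R}

theorem Sel_mk (l : Λ) (x : Yf ω) (y : Yf l) :
    Sel Yf ω p e l ⟨ω, x⟩ ⟨l, y⟩ = if p l x = y then e ⟨l, y⟩ else 0 :=
  dif_pos ⟨rfl, rfl⟩

theorem Mel_mk (l : Λ) (y : Yf l) (x : Yf ω) :
    Mel Yf ω p e l ⟨l, y⟩ ⟨ω, x⟩ = if y = p l x then e ⟨l, y⟩ else 0 :=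
  dif_pos ⟨rfl, rfl⟩

theorem Kel_mk (l : Λ) (x x' : Yf ω) :
    Kel Yf ω p e l ⟨ω, x⟩ ⟨ω, x'⟩ = if p l x = p l x' then e ⟨l, p l x⟩ else 0 :=
  dif_pos ⟨rfl, rfl⟩

theorem tEl_mk (t : Yf ω → R) (x x' : Yf ω) :
    tEl Yf ω e t ⟨ω, x⟩ ⟨ω, x'⟩ = if x = x' then e ⟨ω, x⟩ * t x else 0 := by
  by_cases h : x = x'
  · subst h
    rw [if_pos rfl]
    exact dif_pos ⟨rfl, rfl⟩
  · simp [tEl, h]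

theorem oneEl_mk (l : Λ) (y y' : Yf l) :
    oneEl Yf e l ⟨l, y⟩ ⟨l, y'⟩ = if y = y' then e ⟨l, y⟩ else 0 := by
  simp [oneEl]

variable [Fintype Λ] [∀ l, Fintype (Yf l)]

local infixl:70 " ⋆ " => conv Yf e

theorem oneEl_conv_Sel (heu : ∀ a, IsUnit (e a)) (l : Λ) :
    oneEl Yf e ω ⋆ Sel Yf ω p e l = Sel Yf ω p e l :=
  oneEl_conv_of_apply heu fun _ _ h => dif_neg fun hc => h hc.1

theorem Sel_conv_oneEl (heu : ∀ a, IsUnit (e a)) (l : Λ) :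
    Sel Yf ω p e l ⋆ oneEl Yf e l = Sel Yf ω p e l :=
  conv_oneEl_of_apply heu fun _ _ h => dif_neg fun hc => h hc.2

theorem oneEl_conv_Mel (heu : ∀ a, IsUnit (e a)) (l : Λ) :
    oneEl Yf e l ⋆ Mel Yf ω p e l = Mel Yf ω p e l :=
  oneEl_conv_of_apply heu fun _ _ h => dif_neg fun hc => h hc.1

theorem Mel_conv_oneEl (heu : ∀ a, IsUnit (e a)) (l : Λ) :
    Mel Yf ω p e l ⋆ oneEl Yf e ω = Mel Yf ω p e l :=
  conv_oneEl_of_apply heu fun _ _ h => dif_neg fun hc => h hc.2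

theorem oneEl_conv_Kel (heu : ∀ a, IsUnit (e a)) (l : Λ) :
    oneEl Yf e ω ⋆ Kel Yf ω p e l = Kel Yf ω p e l :=
  oneEl_conv_of_apply heu fun _ _ h => dif_neg fun hc : _ ∧ _ => h hc.1

theorem Kel_conv_oneEl (heu : ∀ a, IsUnit (e a)) (l : Λ) :
    Kel Yf ω p e l ⋆ oneEl Yf e ω = Kel Yf ω p e l :=
  conv_oneEl_of_apply heu fun _ _ h => dif_neg fun hc : _ ∧ _ => h hc.2

theorem oneEl_conv_tEl (heu : ∀ a, IsUnit (e a)) (t : Yf ω → R) :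
    oneEl Yf e ω ⋆ tEl Yf ω e t = tEl Yf ω e t :=
  oneEl_conv_of_apply heu fun _ _ h => dif_neg fun hc => h hc.2

theorem tEl_conv_oneEl (heu : ∀ a, IsUnit (e a)) (t : Yf ω → R) :
    tEl Yf ω e t ⋆ oneEl Yf e ω = tEl Yf ω e t :=
  conv_oneEl_of_apply heu fun _ _ h => dif_neg fun ⟨hab, ha⟩ => h (hab ▸ ha)

theorem Sel_self (heu : ∀ a, IsUnit (e a)) (hpid : ∀ x, p ω x = x) :
    Sel Yf ω p e ω = oneEl Yf e ω :=
  block_ext heu (oneEl_conv_Sel heu ω) (Sel_conv_oneEl heu ω)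
    (oneEl_conv_oneEl_self heu ω) (oneEl_conv_oneEl_self heu ω) fun x x' => by
      rw [Sel_mk, oneEl_mk, hpid]
      split_ifs with h <;> simp [h]

theorem Mel_self (heu : ∀ a, IsUnit (e a)) (hpid : ∀ x, p ω x = x) :
    Mel Yf ω p e ω = oneEl Yf e ω :=
  block_ext heu (oneEl_conv_Mel heu ω) (Mel_conv_oneEl heu ω)
    (oneEl_conv_oneEl_self heu ω) (oneEl_conv_oneEl_self heu ω) fun x x' => by
      rw [Mel_mk, oneEl_mk, hpid]

theorem Sel_conv_Mel (heu : ∀ a, IsUnit (e a)) (l m : Λ) :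
    Sel Yf ω p e l ⋆ Mel Yf ω p e m = if l = m then Kel Yf ω p e l else 0 := by
  split_ifs with h
  · subst h
    refine block_ext heu (by rw [← conv_assoc, oneEl_conv_Sel heu])
      (by rw [conv_assoc, Mel_conv_oneEl heu]) (oneEl_conv_Kel heu l) (Kel_conv_oneEl heu l)
      fun x x' => ?_
    rw [conv_apply_of_oneEl_conv heu _ (oneEl_conv_Mel heu l), Kel_mk]
    simp only [Sel_mk, Mel_mk]
    split_ifs with h <;> simp [h, Ring.mul_inverse_cancel _ (heu _)]
  · exact conv_eq_zero_of_ne heu h (Sel_conv_oneEl heu l) (oneEl_conv_Mel heu m)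

variable (Yf ω p e) in
noncomputable def mInvEl (l : Λ) : YS Yf → YS Yf → R :=
  tEl Yf ω e fun x => (mval Yf ω p e l (p l x))⁻¹ʳ

theorem Mel_conv_mInvEl_mk (heu : ∀ a, IsUnit (e a)) (l : Λ) (y : Yf l) (x : Yf ω) :
    (Mel Yf ω p e l ⋆ mInvEl Yf ω p e l) ⟨l, y⟩ ⟨ω, x⟩ =
      (if y = p l x then e ⟨l, y⟩ else 0) * (mval Yf ω p e l (p l x))⁻¹ʳ := by
  rw [mInvEl, conv_apply_of_oneEl_conv heu _ (oneEl_conv_tEl heu _)]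
  simp [tEl_mk, Mel_mk, mul_assoc, Ring.inverse_mul_cancel_left _ _ (heu _)]

theorem Mel_conv_mInvEl_conv_Sel (heu : ∀ a, IsUnit (e a))
    (hm_unit : ∀ l y, IsUnit (mval Yf ω p e l y)) (l : Λ) :
    Mel Yf ω p e l ⋆ mInvEl Yf ω p e l ⋆ Sel Yf ω p e l = oneEl Yf e l := by
  refine block_ext heu (by simp only [← conv_assoc, oneEl_conv_Mel heu])
    (by simp only [conv_assoc, Sel_conv_oneEl heu]) (oneEl_conv_oneEl_self heu l)
    (oneEl_conv_oneEl_self heu l) fun y y' => ?_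
  rw [conv_apply_of_oneEl_conv heu _ (oneEl_conv_Sel heu l), oneEl_mk]
  simp only [Mel_conv_mInvEl_mk heu, Sel_mk]
  split_ifs with hy
  · subst hy
    calc _ = e ⟨l, y⟩ * (mval Yf ω p e l y)⁻¹ʳ *
          ∑ x, if p l x = y then (e ⟨ω, x⟩)⁻¹ʳ * e ⟨l, y⟩ else 0 := by
          rw [mul_sum]
          refine sum_congr rfl fun x _ => ?_
          by_cases hx : p l x = y
          · simp [hx, mul_assoc]
          · simp [hx, Ne.symm hx]
      _ = e ⟨l, y⟩ * (mval Yf ω p e l y)⁻¹ʳ * mval Yf ω p e l y := rfl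
      _ = e ⟨l, y⟩ := by rw [mul_assoc, Ring.inverse_mul_cancel _ (hm_unit l y), mul_one]
  · refine sum_eq_zero fun x _ => ?_
    split_ifs with h1 h2
    · exact absurd (h1.trans h2) hy
    all_goals simp

theorem sum_conv_Mel_conv_mInvEl_conv_Sel (heu : ∀ a, IsUnit (e a))
    (hm_unit : ∀ l y, IsUnit (mval Yf ω p e l y)) (f : YS Yf → YS Yf → R) :
    ∑ l, f ⋆ Mel Yf ω p e l ⋆ mInvEl Yf ω p e l ⋆ Sel Yf ω p e l = f := by
  conv_rhs => rw [← sum_conv_oneEl heu f]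
  simp only [← Mel_conv_mInvEl_conv_Sel heu hm_unit, conv_assoc]

theorem sum_Mel_conv_mInvEl_conv_Sel_conv (heu : ∀ a, IsUnit (e a))
    (hm_unit : ∀ l y, IsUnit (mval Yf ω p e l y)) (f : YS Yf → YS Yf → R) :
    ∑ l, Mel Yf ω p e l ⋆ mInvEl Yf ω p e l ⋆ Sel Yf ω p e l ⋆ f = f := by
  conv_rhs => rw [← sum_oneEl_conv heu f]
  simp only [← Mel_conv_mInvEl_conv_Sel heu hm_unit]

theorem Sel_conv_eq_ite (heu : ∀ a, IsUnit (e a)) (hpid : ∀ x, p ω x = x) (l : Λ)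
    {f : YS Yf → YS Yf → R} (hf : oneEl Yf e ω ⋆ f = f) :
    Sel Yf ω p e l ⋆ f = if l = ω then f else 0 := by
  split_ifs with hl
  · rw [hl, Sel_self heu hpid, hf]
  · exact conv_eq_zero_of_ne heu hl (Sel_conv_oneEl heu l) hf

theorem conv_Mel_eq_ite (heu : ∀ a, IsUnit (e a)) (hpid : ∀ x, p ω x = x) (l : Λ)
    {f : YS Yf → YS Yf → R} (hf : f ⋆ oneEl Yf e ω = f) :
    f ⋆ Mel Yf ω p e l = if l = ω then f else 0 := by
  split_ifs with hl
  · rw [hl, Mel_self heu hpid, hf]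
  · exact conv_eq_zero_of_ne heu (Ne.symm hl) hf (oneEl_conv_Mel heu l)

end SplitsMerges

theorem smul_ringInverse {G R : Type*} [Monoid G] [Semiring R] [MulSemiringAction G R]
    (g : G) {r : R} (hr : IsUnit r) : g • r⁻¹ʳ = (g • r)⁻¹ʳ := by
  have hgr : IsUnit (g • r) := hr.map (MulSemiringAction.toRingHom G R g)
  rw [← mul_one (g • r⁻¹ʳ), ← Ring.mul_inverse_cancel _ hgr, ← mul_assoc, ← smul_mul',
    Ring.inverse_mul_cancel _ hr, smul_one, one_mul]

section Equivariance

variable {G R Λ : Type*} [Group G] [Ring R] [MulSemiringAction G R]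
  {Yf : Λ → Type*} [∀ l, Fintype (Yf l)] [∀ l, DecidableEq (Yf l)] [∀ l, MulAction G (Yf l)]
  {ω : Λ} {p : ∀ l, Yf ω → Yf l} {e : YS Yf → R}

theorem mval_smul (hpequiv : ∀ (l : Λ) (g : G) (x : Yf ω), p l (g • x) = g • p l x)
    (hee : ∀ (g : G) (l : Λ) (y : Yf l), e ⟨l, g • y⟩ = g • e ⟨l, y⟩)
    (heu : ∀ a, IsUnit (e a)) (g : G) (l : Λ) (y : Yf l) :
    mval Yf ω p e l (g • y) = g • mval Yf ω p e l y := by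
  rw [mval, mval, smul_sum]
  refine (Fintype.sum_equiv (MulAction.toPerm g) _ _ fun x => ?_).symm
  simp only [MulAction.toPerm_apply, hpequiv, smul_left_cancel_iff]
  split_ifs
  · rw [hee, hee, smul_mul', smul_ringInverse g (heu _)]
  · exact smul_zero g

end Equivariance

section SchurDuality

variable {k G R Λ : Type*} [Field k] [Group G] [Ring R] [Algebra k R] [MulSemiringAction G R]
  [SMulCommClass G k R] [Fintype Λ] [DecidableEq Λ]
  {Yf : Λ → Type*} [∀ l, Fintype (Yf l)] [∀ l, DecidableEq (Yf l)] [∀ l, MulAction G (Yf l)]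
  {ω : Λ} {p : ∀ l, Yf ω → Yf l} {e : YS Yf → R} {T : Subring R}

local infixl:70 " ⋆ " => conv Yf e

theorem InB_zero : InB k G Yf ω p e T 0 := by
  simpa using InB.smul (0 : k) (InB.K (k := k) (G := G) (p := p) (e := e) (T := T) ω)

theorem InB_ite_zero (P : Prop) [Decidable P] {b : YS Yf → YS Yf → R}
    (hb : InB k G Yf ω p e T b) : InB k G Yf ω p e T (if P then b else 0) := by
  split_ifs
  exacts [hb, InB_zero]

theorem InB_sum {ι : Type*} (s : Finset ι) {f : ι → YS Yf → YS Yf → R}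
    (hf : ∀ i ∈ s, InB k G Yf ω p e T (f i)) : InB k G Yf ω p e T (∑ i ∈ s, f i) :=
  sum_induction _ _ (fun _ _ => InB.add) InB_zero hf

theorem InA_zero : InA k G Yf ω p e T 0 :=
  InA.ofB InB_zero

theorem InA_sum {ι : Type*} (s : Finset ι) {f : ι → YS Yf → YS Yf → R}
    (hf : ∀ i ∈ s, InA k G Yf ω p e T (f i)) : InA k G Yf ω p e T (∑ i ∈ s, f i) :=
  sum_induction _ _ (fun _ _ => InA.add) InA_zero hf

theorem InA_oneEl (heu : ∀ a, IsUnit (e a)) (hpid : ∀ x, p ω x = x) :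
    InA k G Yf ω p e T (oneEl Yf e ω) :=
  Sel_self heu hpid ▸ InA.S ω

theorem InB.oneEl_conv (heu : ∀ a, IsUnit (e a)) {b : YS Yf → YS Yf → R}
    (hb : InB k G Yf ω p e T b) : oneEl Yf e ω ⋆ b = b := by
  induction hb with
  | K l => exact oneEl_conv_Kel heu l
  | t t => exact oneEl_conv_tEl heu t
  | add _ _ ihf ihg => rw [conv_add_right, ihf, ihg]
  | smul c _ ih => rw [conv_smul_right, ih]
  | mul _ _ ih => rw [← conv_assoc, ih]

theorem InB.conv_oneEl (heu : ∀ a, IsUnit (e a)) {b : YS Yf → YS Yf → R}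
    (hb : InB k G Yf ω p e T b) : b ⋆ oneEl Yf e ω = b := by
  induction hb with
  | K l => exact Kel_conv_oneEl heu l
  | t t => exact tEl_conv_oneEl heu t
  | add _ _ ihf ihg => rw [conv_add_left, ihf, ihg]
  | smul c _ ih => rw [conv_smul_left, ih]
  | mul _ _ _ ih => rw [conv_assoc, ih]

theorem InB_mInvEl (hpequiv : ∀ (l : Λ) (g : G) (x : Yf ω), p l (g • x) = g • p l x)
    (hee : ∀ (g : G) (l : Λ) (y : Yf l), e ⟨l, g • y⟩ = g • e ⟨l, y⟩)
    (heu : ∀ a, IsUnit (e a)) (hm_unit : ∀ l y, IsUnit (mval Yf ω p e l y))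
    (hm_inv_T : ∀ l y, (mval Yf ω p e l y)⁻¹ʳ ∈ T) (l : Λ) :
    InB k G Yf ω p e T (mInvEl Yf ω p e l) :=
  InB.t _ (fun g x => by rw [hpequiv, mval_smul hpequiv hee heu, smul_ringInverse g (hm_unit _ _)])
    fun x => hm_inv_T l (p l x)

theorem InA.InB_Sel_conv_conv_Mel (hpid : ∀ x, p ω x = x)
    (hpequiv : ∀ (l : Λ) (g : G) (x : Yf ω), p l (g • x) = g • p l x)
    (hee : ∀ (g : G) (l : Λ) (y : Yf l), e ⟨l, g • y⟩ = g • e ⟨l, y⟩)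
    (heu : ∀ a, IsUnit (e a)) (hm_unit : ∀ l y, IsUnit (mval Yf ω p e l y))
    (hm_inv_T : ∀ l y, (mval Yf ω p e l y)⁻¹ʳ ∈ T) {a : YS Yf → YS Yf → R}
    (ha : InA k G Yf ω p e T a) (l m : Λ) :
    InB k G Yf ω p e T (Sel Yf ω p e l ⋆ a ⋆ Mel Yf ω p e m) := by
  induction ha generalizing l m with
  | ofB hb =>
    rw [Sel_conv_eq_ite heu hpid l (hb.oneEl_conv heu)]
    split_ifs
    · rw [conv_Mel_eq_ite heu hpid m (hb.conv_oneEl heu)]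
      exact InB_ite_zero _ hb
    · rw [conv_zero_left]
      exact InB_zero
  | S ν =>
    rw [Sel_conv_eq_ite heu hpid l (oneEl_conv_Sel heu ν)]
    split_ifs
    · rw [Sel_conv_Mel heu]
      exact InB_ite_zero _ (InB.K ν)
    · rw [conv_zero_left]
      exact InB_zero
  | M ν =>
    rw [Sel_conv_Mel heu]
    split_ifs
    · rw [conv_Mel_eq_ite heu hpid m (Kel_conv_oneEl heu l)]
      exact InB_ite_zero _ (InB.K l)
    · rw [conv_zero_left]
      exact InB_zero
  | add _ _ ihf ihg =>
    rw [conv_add_right, conv_add_left]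
    exact (ihf l m).add (ihg l m)
  | smul c _ ih =>
    rw [conv_smul_right, conv_smul_left]
    exact (ih l m).smul c
  | @mul f g _ _ ihf ihg =>
    -- insert `∑ ν, M_ν * t_ν * S_ν = 1` between `f` and `g`
    rw [← sum_conv_Mel_conv_mInvEl_conv_Sel heu hm_unit f]
    simp only [conv_sum_left, conv_sum_right]
    refine InB_sum _ fun ν _ => ?_
    simpa only [conv_assoc] using
      ((ihf l ν).mul (InB_mInvEl hpequiv hee heu hm_unit hm_inv_T ν)).mul (ihg ν m)

theorem InB_of_InA (hpid : ∀ x, p ω x = x)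
    (hpequiv : ∀ (l : Λ) (g : G) (x : Yf ω), p l (g • x) = g • p l x)
    (hee : ∀ (g : G) (l : Λ) (y : Yf l), e ⟨l, g • y⟩ = g • e ⟨l, y⟩)
    (heu : ∀ a, IsUnit (e a)) (hm_unit : ∀ l y, IsUnit (mval Yf ω p e l y))
    (hm_inv_T : ∀ l y, (mval Yf ω p e l y)⁻¹ʳ ∈ T) {a : YS Yf → YS Yf → R}
    (ha : InA k G Yf ω p e T a) (hl : oneEl Yf e ω ⋆ a = a) (hr : a ⋆ oneEl Yf e ω = a) :
    InB k G Yf ω p e T a := by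
  have := ha.InB_Sel_conv_conv_Mel hpid hpequiv hee heu hm_unit hm_inv_T ω ω
  rwa [Sel_self heu hpid, Mel_self heu hpid, hl, hr] at this

variable (k G Yf ω p e T) in
def CT : Submodule k (YS Yf → YS Yf → R) :=
  Submodule.span k {x | ∃ a, InA k G Yf ω p e T a ∧ x = a ⋆ oneEl Yf e ω}

theorem mem_CT_iff (heu : ∀ a, IsUnit (e a)) (hpid : ∀ x, p ω x = x)
    {c : YS Yf → YS Yf → R} :
    c ∈ CT k G Yf ω p e T ↔ InA k G Yf ω p e T c ∧ c ⋆ oneEl Yf e ω = c := by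
  refine ⟨fun hc => ?_, fun ⟨hcA, hc⟩ => Submodule.subset_span ⟨c, hcA, hc.symm⟩⟩
  induction hc using Submodule.span_induction with
  | mem x hx =>
    obtain ⟨a, ha, rfl⟩ := hx
    exact ⟨ha.mul (InA_oneEl heu hpid), by rw [conv_assoc, oneEl_conv_oneEl_self heu]⟩
  | zero => exact ⟨InA_zero, conv_zero_left _⟩
  | add _ _ _ _ ihx ihy =>
    exact ⟨ihx.1.add ihy.1, by rw [conv_add_left, ihx.2, ihy.2]⟩
  | smul c _ _ ih => exact ⟨ih.1.smul c, by rw [conv_smul_left, ih.2]⟩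

theorem exists_unique_InB_of_leftLinear (hpid : ∀ x, p ω x = x)
    (hpequiv : ∀ (l : Λ) (g : G) (x : Yf ω), p l (g • x) = g • p l x)
    (hee : ∀ (g : G) (l : Λ) (y : Yf l), e ⟨l, g • y⟩ = g • e ⟨l, y⟩)
    (heu : ∀ a, IsUnit (e a)) (hm_unit : ∀ l y, IsUnit (mval Yf ω p e l y))
    (hm_inv_T : ∀ l y, (mval Yf ω p e l y)⁻¹ʳ ∈ T)
    (φ : CT k G Yf ω p e T →ₗ[k] CT k G Yf ω p e T)
    (hφ : ∀ a, InA k G Yf ω p e T a → ∀ (c : YS Yf → YS Yf → R) (hc : c ∈ CT k G Yf ω p e T)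
      (hac : a ⋆ c ∈ CT k G Yf ω p e T), (φ ⟨a ⋆ c, hac⟩ : YS Yf → YS Yf → R) = a ⋆ φ ⟨c, hc⟩) :
    ∃! b : YS Yf → YS Yf → R, InB k G Yf ω p e T b ∧
      ∀ (c : YS Yf → YS Yf → R) (hc : c ∈ CT k G Yf ω p e T),
        (φ ⟨c, hc⟩ : YS Yf → YS Yf → R) = c ⋆ b := by
  have h1 : oneEl Yf e ω ∈ CT k G Yf ω p e T :=
    (mem_CT_iff heu hpid).2 ⟨InA_oneEl heu hpid, oneEl_conv_oneEl_self heu ω⟩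
  have hφ1 : ∀ c (hc : c ∈ CT k G Yf ω p e T), (φ ⟨c, hc⟩ : YS Yf → YS Yf → R) =
      c ⋆ φ ⟨oneEl Yf e ω, h1⟩ := by
    intro c hc
    obtain ⟨hcA, hc1⟩ := (mem_CT_iff heu hpid).1 hc
    rw [← hφ c hcA _ h1 (by rwa [hc1])]
    exact congrArg _ (congrArg φ (Subtype.ext hc1.symm))
  obtain ⟨hbA, hbr⟩ := (mem_CT_iff heu hpid).1 (φ ⟨oneEl Yf e ω, h1⟩).2
  refine ⟨_, ⟨InB_of_InA hpid hpequiv hee heu hm_unit hm_inv_T hbA (hφ1 _ h1).symm hbr,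
    hφ1⟩, fun b ⟨hb, hφb⟩ => ?_⟩
  rw [hφb _ h1, hb.oneEl_conv heu]

theorem exists_unique_InA_of_rightLinear (hpid : ∀ x, p ω x = x)
    (hpequiv : ∀ (l : Λ) (g : G) (x : Yf ω), p l (g • x) = g • p l x)
    (hee : ∀ (g : G) (l : Λ) (y : Yf l), e ⟨l, g • y⟩ = g • e ⟨l, y⟩)
    (heu : ∀ a, IsUnit (e a)) (hm_unit : ∀ l y, IsUnit (mval Yf ω p e l y))
    (hm_inv_T : ∀ l y, (mval Yf ω p e l y)⁻¹ʳ ∈ T)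
    (ψ : CT k G Yf ω p e T →ₗ[k] CT k G Yf ω p e T)
    (hψ : ∀ b, InB k G Yf ω p e T b → ∀ (c : YS Yf → YS Yf → R) (hc : c ∈ CT k G Yf ω p e T)
      (hcb : c ⋆ b ∈ CT k G Yf ω p e T), (ψ ⟨c ⋆ b, hcb⟩ : YS Yf → YS Yf → R) = ψ ⟨c, hc⟩ ⋆ b) :
    ∃! a : YS Yf → YS Yf → R, InA k G Yf ω p e T a ∧
      ∀ (c : YS Yf → YS Yf → R) (hc : c ∈ CT k G Yf ω p e T),
        (ψ ⟨c, hc⟩ : YS Yf → YS Yf → R) = a ⋆ c := by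
  have hM : ∀ l, Mel Yf ω p e l ∈ CT k G Yf ω p e T := fun l =>
    (mem_CT_iff heu hpid).2 ⟨InA.M l, Mel_conv_oneEl heu l⟩
  have ht : ∀ l, InB k G Yf ω p e T (mInvEl Yf ω p e l) :=
    InB_mInvEl hpequiv hee heu hm_unit hm_inv_T
  refine ⟨∑ l, (ψ ⟨Mel Yf ω p e l, hM l⟩ : YS Yf → YS Yf → R) ⋆ mInvEl Yf ω p e l ⋆
      Sel Yf ω p e l, ⟨InA_sum _ fun l _ => ?_, fun c hc => ?_⟩, fun a ⟨_, ha⟩ => ?_⟩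
  · exact (((mem_CT_iff heu hpid).1 (ψ _).2).1.mul (InA.ofB (ht l))).mul (InA.S l)
  · obtain ⟨hcA, hc1⟩ := (mem_CT_iff heu hpid).1 hc
    have hb : ∀ l, InB k G Yf ω p e T (mInvEl Yf ω p e l ⋆ Sel Yf ω p e l ⋆ c) := fun l =>
      InB_of_InA hpid hpequiv hee heu hm_unit hm_inv_T ((InA.ofB (ht l)).mul (InA.S l) |>.mul hcA)
        (by rw [← conv_assoc, ← conv_assoc, (ht l).oneEl_conv heu]) (by rw [conv_assoc, hc1])
    have hMb : ∀ l, Mel Yf ω p e l ⋆ (mInvEl Yf ω p e l ⋆ Sel Yf ω p e l ⋆ c) ∈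
        CT k G Yf ω p e T := fun l =>
      (mem_CT_iff heu hpid).2
        ⟨(InA.M l).mul (InA.ofB (hb l)), by rw [conv_assoc, (hb l).conv_oneEl heu]⟩
    have hc_sum : (⟨c, hc⟩ : CT k G Yf ω p e T) = ∑ l, ⟨_, hMb l⟩ := by
      ext1
      simp only [Submodule.coe_sum, ← conv_assoc, sum_Mel_conv_mInvEl_conv_Sel_conv heu hm_unit]
    rw [hc_sum, map_sum, Submodule.coe_sum, conv_sum_left]
    exact sum_congr rfl fun l _ => by rw [hψ _ (hb l) _ (hM l) (hMb l)]; simp only [conv_assoc]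
  · rw [← sum_conv_Mel_conv_mInvEl_conv_Sel heu hm_unit a]
    exact sum_congr rfl fun l _ => by rw [← ha _ (hM l)]

theorem setOf_InB_eq (hpid : ∀ x, p ω x = x)
    (hpequiv : ∀ (l : Λ) (g : G) (x : Yf ω), p l (g • x) = g • p l x)
    (hee : ∀ (g : G) (l : Λ) (y : Yf l), e ⟨l, g • y⟩ = g • e ⟨l, y⟩)
    (heu : ∀ a, IsUnit (e a)) (hm_unit : ∀ l y, IsUnit (mval Yf ω p e l y))
    (hm_inv_T : ∀ l y, (mval Yf ω p e l y)⁻¹ʳ ∈ T) :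
    {x | InB k G Yf ω p e T x} =
      {x | ∃ a, InA k G Yf ω p e T a ∧ x = oneEl Yf e ω ⋆ a ⋆ oneEl Yf e ω} := by
  ext x
  refine ⟨fun hx => ⟨x, InA.ofB hx, by rw [hx.oneEl_conv heu, hx.conv_oneEl heu]⟩, ?_⟩
  rintro ⟨a, ha, rfl⟩
  exact InB_of_InA hpid hpequiv hee heu hm_unit hm_inv_T
    (((InA_oneEl heu hpid).mul ha).mul (InA_oneEl heu hpid))
    (by simp only [← conv_assoc, oneEl_conv_oneEl_self heu])
    (by simp only [conv_assoc, oneEl_conv_oneEl_self heu])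

end SchurDuality

theorem stmt5 (k : Type*) {G R : Type*} {Λ : Type*} [Field k] [Group G]
    [Ring R] [Algebra k R] [MulSemiringAction G R] [SMulCommClass G k R]
    [Fintype Λ] [DecidableEq Λ]
    (Yf : Λ → Type*) [∀ l, Fintype (Yf l)] [∀ l, DecidableEq (Yf l)]
    [∀ l, MulAction G (Yf l)]
    (ω : Λ) (p : ∀ l, Yf ω → Yf l)
    (hpid : ∀ x, p ω x = x)
    (hpequiv : ∀ (l : Λ) (g : G) (x : Yf ω), p l (g • x) = g • p l x)
    (e : YS Yf → R)
    (hee : ∀ (g : G) (l : Λ) (y : Yf l), e ⟨l, g • y⟩ = g • e ⟨l, y⟩)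
    (heu : ∀ a, IsUnit (e a))
    (T : Subring R)
    (hm_unit : ∀ (l : Λ) (y : Yf l), IsUnit (mval Yf ω p e l y))
    (hm_inv_T : ∀ (l : Λ) (y : Yf l), Ring.inverse (mval Yf ω p e l y) ∈ T) :
    -- `C^𝒯 = A^𝒯 * 1_ω`
    letI Csub : Submodule k (YS Yf → YS Yf → R) :=
      Submodule.span k
        {x | ∃ a, InA k G Yf ω p e T a ∧ x = conv Yf e a (oneEl Yf e ω)}
    -- (1) every endomorphism of `C^𝒯` as a left `A^𝒯`-module is right convolution
    --     with a unique element of `B^𝒯`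
    (∀ φ : Csub →ₗ[k] Csub,
      (∀ a, InA k G Yf ω p e T a → ∀ (c : YS Yf → YS Yf → R) (hc : c ∈ Csub)
        (hac : conv Yf e a c ∈ Csub),
          (φ ⟨conv Yf e a c, hac⟩ : YS Yf → YS Yf → R) =
            conv Yf e a (φ ⟨c, hc⟩)) →
      ∃! b : YS Yf → YS Yf → R, InB k G Yf ω p e T b ∧
        ∀ (c : YS Yf → YS Yf → R) (hc : c ∈ Csub),
          (φ ⟨c, hc⟩ : YS Yf → YS Yf → R) = conv Yf e c b) ∧
    -- (2) every endomorphism of `C^𝒯` as a right `B^𝒯`-module is left convolution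
    --     with a unique element of `A^𝒯`
    (∀ ψ : Csub →ₗ[k] Csub,
      (∀ b, InB k G Yf ω p e T b → ∀ (c : YS Yf → YS Yf → R) (hc : c ∈ Csub)
        (hcb : conv Yf e c b ∈ Csub),
          (ψ ⟨conv Yf e c b, hcb⟩ : YS Yf → YS Yf → R) =
            conv Yf e (ψ ⟨c, hc⟩) b) →
      ∃! a : YS Yf → YS Yf → R, InA k G Yf ω p e T a ∧
        ∀ (c : YS Yf → YS Yf → R) (hc : c ∈ Csub),
          (ψ ⟨c, hc⟩ : YS Yf → YS Yf → R) = conv Yf e a c) ∧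
    -- moreover `B^𝒯 = 1_ω * A^𝒯 * 1_ω`
    ({x | InB k G Yf ω p e T x} =
      {x | ∃ a, InA k G Yf ω p e T a ∧
        x = conv Yf e (conv Yf e (oneEl Yf e ω) a) (oneEl Yf e ω)}) := by
  exact ⟨exists_unique_InB_of_leftLinear hpid hpequiv hee heu hm_unit hm_inv_T,
    exists_unique_InA_of_rightLinear hpid hpequiv hee heu hm_unit hm_inv_T,
    setOf_InB_eq hpid hpequiv hee heu hm_unit hm_inv_T⟩
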